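/- Let f : I ⊆ ℝ → ℝ be twice differentiable on the interior I° of I, with a, b ∈ I°, a < b, and f'' Lebesgue integrable on [a,b]. Let q ≥ 1. If |f''|^q is quasi-convex on [a,b], then |(1/(b-a)) ∫_a^b f(x) dx − f((a+b)/2)| ≤ ((b-a)²/24) · (sup{|f''(a)|^q, |f''(b)|^q})^{1/q}. -/

import Mathlib

/-!
Integrating by parts twice on each half of `[a, b]` writes the midpoint-rule error
`∫ f - (b - a) f m`, `m = (a + b) / 2`, as `∫ K f''` for the Peano kernel `K x = (x - a) ^ 2 / 2`
on `[a, m]` and `(x - b) ^ 2 / 2` on `[m, b]`, whose integral is `(b - a) ^ 3 / 24`. Quasi-convexity of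
`|f''| ^ q` bounds `|f''|` on `[a, b]` by `max |f'' a| |f'' b|`, which is exactly the power mean
on the right-hand side.
-/

open MeasureTheory Set intervalIntegral

theorem QuasiconvexOn.le_max_of_mem_segment {𝕜 E β : Type*} [Semiring 𝕜] [PartialOrder 𝕜]
    [AddCommMonoid E] [Module 𝕜 E] [LinearOrder β] {s : Set E} {f : E → β} {x y z : E}
    (hf : QuasiconvexOn 𝕜 s f) (hx : x ∈ s) (hy : y ∈ s) (hz : z ∈ segment 𝕜 x y) :
    f z ≤ max (f x) (f y) := by
  obtain ⟨a, b, ha, hb, hab, rfl⟩ := hz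
  exact (quasiconvexOn_iff_le_max.1 hf).2 hx hy ha hb hab

theorem abs_le_max_of_quasiconvexOn_abs_rpow {g : ℝ → ℝ} {a b q x : ℝ} (hq : 0 < q)
    (hg : QuasiconvexOn ℝ (Icc a b) fun x => |g x| ^ q) (hx : x ∈ Icc a b) :
    |g x| ≤ max |g a| |g b| := by
  have hab : a ≤ b := hx.1.trans hx.2
  have h := hg.le_max_of_mem_segment (left_mem_Icc.2 hab) (right_mem_Icc.2 hab)
    (by rwa [segment_eq_Icc hab])
  rw [← Real.rpow_max (abs_nonneg _) (abs_nonneg _) hq.le] at h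
  exact (Real.rpow_le_rpow_iff (abs_nonneg _) (le_max_of_le_left (abs_nonneg _)) hq).1 h

theorem integral_sq_mul_eq_of_hasDerivAt {f f' f'' : ℝ → ℝ} {c d : ℝ}
    (hf : ∀ x ∈ uIcc c d, HasDerivAt f (f' x) x) (hf' : ∀ x ∈ uIcc c d, HasDerivAt f' (f'' x) x)
    (hf'' : IntervalIntegrable f'' volume c d) :
    ∫ x in c..d, (x - c) ^ 2 / 2 * f'' x =
      (d - c) ^ 2 / 2 * f' d - (d - c) * f d + ∫ x in c..d, f x := by
  have hf'_int : IntervalIntegrable f' volume c d :=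
    ContinuousOn.intervalIntegrable fun x hx => (hf' x hx).continuousAt.continuousWithinAt
  have hsq : ∀ x ∈ uIcc c d, HasDerivAt (fun y => (y - c) ^ 2 / 2) (x - c) x := fun x _ => by
    simpa using (((hasDerivAt_id x).sub_const c).pow 2).div_const 2
  have hlin : ∀ x ∈ uIcc c d, HasDerivAt (fun y => y - c) 1 x := fun x _ =>
    (hasDerivAt_id x).sub_const c
  rw [integral_mul_deriv_eq_deriv_mul hsq hf'
      ((by fun_prop : Continuous fun x => x - c).intervalIntegrable c d) hf'',
    integral_mul_deriv_eq_deriv_mul hlin hf intervalIntegrable_const hf'_int]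
  simp only [sub_self, one_mul]
  ring

theorem abs_integral_sq_mul_le {g : ℝ → ℝ} {c d M : ℝ} (hM : 0 ≤ M)
    (hg : ∀ x ∈ uIoc c d, |g x| ≤ M) :
    |∫ x in c..d, (x - c) ^ 2 / 2 * g x| ≤ |d - c| ^ 3 / 6 * M := by
  have hkernel : ∫ x in c..d, (x - c) ^ 2 / 2 * M = (d - c) ^ 3 / 6 * M := by
    simp only [intervalIntegral.integral_mul_const, intervalIntegral.integral_div,
      integral_comp_sub_right fun x => x ^ 2, integral_pow]
    ring
  calc |∫ x in c..d, (x - c) ^ 2 / 2 * g x|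
      ≤ |∫ x in c..d, (x - c) ^ 2 / 2 * M| := by
        rw [← Real.norm_eq_abs]
        refine norm_integral_le_abs_of_norm_le ?_
          ((by fun_prop : Continuous fun x => (x - c) ^ 2 / 2 * M).intervalIntegrable c d)
        refine (ae_restrict_mem measurableSet_uIoc).mono fun x hx => ?_
        rw [Real.norm_eq_abs, abs_mul, abs_of_nonneg (by positivity)]
        exact mul_le_mul_of_nonneg_left (hg x hx) (by positivity)
    _ = |d - c| ^ 3 / 6 * M := by
        rw [hkernel, abs_mul, abs_div, abs_pow, abs_of_pos (by norm_num : (0 : ℝ) < 6),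
          abs_of_nonneg hM]

theorem add_div_two_mem_uIcc {𝕜 : Type*} [Field 𝕜] [LinearOrder 𝕜] [IsStrictOrderedRing 𝕜]
    (a b : 𝕜) : (a + b) / 2 ∈ uIcc a b := by
  rcases le_total a b with h | h
  · exact mem_uIcc.2 (Or.inl ⟨by linarith, by linarith⟩)
  · exact mem_uIcc.2 (Or.inr ⟨by linarith, by linarith⟩)

theorem integral_sub_mul_midpoint_eq {f f' f'' : ℝ → ℝ} {a b : ℝ}
    (hf : ∀ x ∈ uIcc a b, HasDerivAt f (f' x) x) (hf' : ∀ x ∈ uIcc a b, HasDerivAt f' (f'' x) x)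
    (hf'' : IntervalIntegrable f'' volume a b) :
    (∫ x in a..b, f x) - (b - a) * f ((a + b) / 2) =
      (∫ x in a..(a + b) / 2, (x - a) ^ 2 / 2 * f'' x) -
        ∫ x in b..(a + b) / 2, (x - b) ^ 2 / 2 * f'' x := by
  have hm := add_div_two_mem_uIcc a b
  set m := (a + b) / 2
  have hleft : uIcc a m ⊆ uIcc a b := uIcc_subset_uIcc left_mem_uIcc hm
  have hright : uIcc b m ⊆ uIcc a b := uIcc_subset_uIcc right_mem_uIcc hm
  have hf_int : ∀ {c d}, uIcc c d ⊆ uIcc a b → IntervalIntegrable f volume c d := fun h =>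
    ContinuousOn.intervalIntegrable fun x hx => (hf x (h hx)).continuousAt.continuousWithinAt
  rw [integral_sq_mul_eq_of_hasDerivAt (fun x hx => hf x (hleft hx)) (fun x hx => hf' x (hleft hx))
      (hf''.mono_set hleft),
    integral_sq_mul_eq_of_hasDerivAt (fun x hx => hf x (hright hx))
      (fun x hx => hf' x (hright hx)) (hf''.mono_set hright),
    ← integral_add_adjacent_intervals (hf_int hleft) (hf_int (uIcc_comm b m ▸ hright)),
    integral_symm m b]
  rw [show m - a = -(m - b) by ring]
  ring

theorem abs_integral_sub_mul_midpoint_le {f f' f'' : ℝ → ℝ} {a b M : ℝ}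
    (hf : ∀ x ∈ uIcc a b, HasDerivAt f (f' x) x) (hf' : ∀ x ∈ uIcc a b, HasDerivAt f' (f'' x) x)
    (hf'' : IntervalIntegrable f'' volume a b) (hM : ∀ x ∈ uIcc a b, |f'' x| ≤ M) :
    |(∫ x in a..b, f x) - (b - a) * f ((a + b) / 2)| ≤ |b - a| ^ 3 / 24 * M := by
  have hM0 : 0 ≤ M := (abs_nonneg _).trans (hM a left_mem_uIcc)
  have hhalf : ∀ c ∈ uIcc a b, ∀ x ∈ uIoc c ((a + b) / 2), |f'' x| ≤ M := fun c hc x hx =>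
    hM x (uIcc_subset_uIcc hc (add_div_two_mem_uIcc a b) (uIoc_subset_uIcc hx))
  rw [integral_sub_mul_midpoint_eq hf hf' hf'']
  calc _ ≤ |∫ x in a..(a + b) / 2, (x - a) ^ 2 / 2 * f'' x| +
        |∫ x in b..(a + b) / 2, (x - b) ^ 2 / 2 * f'' x| := abs_sub _ _
    _ ≤ |(a + b) / 2 - a| ^ 3 / 6 * M + |(a + b) / 2 - b| ^ 3 / 6 * M :=
        add_le_add (abs_integral_sq_mul_le hM0 (hhalf a left_mem_uIcc))
          (abs_integral_sq_mul_le hM0 (hhalf b right_mem_uIcc))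
    _ = |b - a| ^ 3 / 24 * M := by
        rw [show (a + b) / 2 - a = (b - a) / 2 by ring,
          show (a + b) / 2 - b = -((b - a) / 2) by ring, abs_neg, abs_div, abs_two]
        ring

theorem hermite_hadamard_second_deriv_abs_pow_quasiconvex_power_mean
    (I : Set ℝ) (hI : I.OrdConnected) (f f' f'' : ℝ → ℝ) (a b : ℝ)
    (ha : a ∈ interior I) (hb : b ∈ interior I) (hab : a < b)
    (hderiv1 : ∀ x ∈ interior I, HasDerivAt f (f' x) x)
    (hderiv2 : ∀ x ∈ interior I, HasDerivAt f' (f'' x) x)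
    (hint : IntervalIntegrable f'' volume a b)
    (q : ℝ) (hq : 1 ≤ q)
    (hqc : QuasiconvexOn ℝ (Set.Icc a b) (fun x => |f'' x| ^ q)) :
    |(1 / (b - a)) * (∫ x in a..b, f x) - f ((a + b) / 2)| ≤
      (b - a) ^ 2 / 24 * (max (|f'' a| ^ q) (|f'' b| ^ q)) ^ (1 / q) := by
  have hq0 : 0 < q := zero_lt_one.trans_le hq
  have hba : 0 < b - a := sub_pos.2 hab
  have hsub : uIcc a b ⊆ interior I := uIcc_of_le hab.le ▸ hI.interior.out ha hb
  have hbound : ∀ x ∈ uIcc a b, |f'' x| ≤ max |f'' a| |f'' b| := fun x hx =>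
    abs_le_max_of_quasiconvexOn_abs_rpow hq0 hqc (uIcc_of_le hab.le ▸ hx)
  have herr := abs_integral_sub_mul_midpoint_le (fun x hx => hderiv1 x (hsub hx))
    (fun x hx => hderiv2 x (hsub hx)) hint hbound
  rw [abs_of_pos hba] at herr
  rw [← Real.rpow_max (abs_nonneg _) (abs_nonneg _) hq0.le, one_div q,
    Real.rpow_rpow_inv (le_max_of_le_left (abs_nonneg _)) hq0.ne']
  calc |1 / (b - a) * (∫ x in a..b, f x) - f ((a + b) / 2)|
      = |((∫ x in a..b, f x) - (b - a) * f ((a + b) / 2)) / (b - a)| := by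
        congr 1
        field_simp
    _ = |(∫ x in a..b, f x) - (b - a) * f ((a + b) / 2)| / (b - a) := by
        rw [abs_div, abs_of_pos hba]
    _ ≤ (b - a) ^ 3 / 24 * max |f'' a| |f'' b| / (b - a) := by gcongr
    _ = (b - a) ^ 2 / 24 * max |f'' a| |f'' b| := by
        field_simp
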